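/- Every variable-free CoR term is semantically equivalent, over all structures with at least 3 elements, to one of the four constants ⊥, ⊤, I, D. Equivalently, the quotient of the 0-variable-occurrence fragment of CoR by semantic equivalence over REL_{≥3} has exactly the four classes [⊥], [⊤], [I], [D]. -/
import Mathlib


/-- Terms of the calculus of relations over variables `V`. -/
inductive CoR (V : Type) : Type
  | var : V → CoR V
  | bot : CoR V
  | top : CoR V
  | ident : CoR V
  | diff : CoR V
  | union : CoR V → CoR V → CoR V
  | inter : CoR V → CoR V → CoR V
  | compl : CoR V → CoR V
  | comp : CoR V → CoR V → CoR V
  | dagger : CoR V → CoR V → CoR V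
  | proj : (Fin 2 → Fin 2) → CoR V → CoR V

/-- Standard relational semantics of CoR terms on a set `M`, under a valuation `ρ`. -/
def denote {V M : Type} (ρ : V → Set (M × M)) : CoR V → Set (M × M)
  | .var a => ρ a
  | .bot => ∅
  | .top => Set.univ
  | .ident => {p | p.1 = p.2}
  | .diff => {p | p.1 ≠ p.2}
  | .union t s => denote ρ t ∪ denote ρ s
  | .inter t s => denote ρ t ∩ denote ρ s
  | .compl t => (denote ρ t)ᶜ
  | .comp t s => {p | ∃ z, (p.1, z) ∈ denote ρ t ∧ (z, p.2) ∈ denote ρ s}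
  | .dagger t s => {p | ∀ z, (p.1, z) ∈ denote ρ t ∨ (z, p.2) ∈ denote ρ s}
  | .proj π t => {p | ((fun i : Fin 2 => if i = 0 then p.1 else p.2) (π 0),
                      (fun i : Fin 2 => if i = 0 then p.1 else p.2) (π 1)) ∈ denote ρ t}

/-- Number of variable occurrences in a CoR term. -/
def vo {V : Type} : CoR V → ℕ
  | .var _ => 1
  | .bot => 0
  | .top => 0
  | .ident => 0
  | .diff => 0
  | .union t s => vo t + vo s
  | .inter t s => vo t + vo s
  | .compl t => vo t
  | .comp t s => vo t + vo s
  | .dagger t s => vo t + vo s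
  | .proj _ t => vo t

/-- Semantic equivalence over all structures with at least `3` elements. -/
def equivGe3 {V : Type} (t₁ t₂ : CoR V) : Prop :=
  ∀ (M : Type), (∃ f : Fin 3 → M, Function.Injective f) →
    ∀ ρ : V → Set (M × M), denote ρ t₁ = denote ρ t₂

section Aux

inductive K | kbot | ktop | kid | kdiff
deriving DecidableEq

def denoteK {M : Type} : K → Set (M × M)
  | .kbot => ∅
  | .ktop => Set.univ
  | .kid => {p | p.1 = p.2}
  | .kdiff => {p | p.1 ≠ p.2}

def toCoR {V : Type} : K → CoR V
  | .kbot => .bot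
  | .ktop => .top
  | .kid => .ident
  | .kdiff => .diff

lemma denote_toCoR {V M : Type} (ρ : V → Set (M × M)) (k : K) :
    denote ρ (toCoR k) = denoteK k := by cases k <;> rfl

def unionK : K → K → K
  | .kbot, x => x
  | x, .kbot => x
  | .ktop, _ => .ktop
  | _, .ktop => .ktop
  | .kid, .kid => .kid
  | .kdiff, .kdiff => .kdiff
  | .kid, .kdiff => .ktop
  | .kdiff, .kid => .ktop

def interK : K → K → K
  | .ktop, x => x
  | x, .ktop => x
  | .kbot, _ => .kbot
  | _, .kbot => .kbot
  | .kid, .kid => .kid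
  | .kdiff, .kdiff => .kdiff
  | .kid, .kdiff => .kbot
  | .kdiff, .kid => .kbot

def complK : K → K
  | .kbot => .ktop
  | .ktop => .kbot
  | .kid => .kdiff
  | .kdiff => .kid

def compK : K → K → K
  | .kbot, _ => .kbot
  | _, .kbot => .kbot
  | .kid, x => x
  | x, .kid => x
  | _, _ => .ktop

def daggerK (a b : K) : K := complK (compK (complK a) (complK b))

def projK (π : Fin 2 → Fin 2) (k : K) : K :=
  if π 0 = π 1 then
    (match k with
      | .kid => .ktop
      | .kdiff => .kbot
      | x => x)
  else k

lemma exists_third {M : Type} (h : ∃ f : Fin 3 → M, Function.Injective f) (x y : M) :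
    ∃ z, z ≠ x ∧ z ≠ y := by
  obtain ⟨f, hf⟩ := h
  by_contra hc
  push_neg at hc
  have e0 : f 0 = x ∨ f 0 = y := or_iff_not_imp_left.mpr (hc (f 0))
  have e1 : f 1 = x ∨ f 1 = y := or_iff_not_imp_left.mpr (hc (f 1))
  have e2 : f 2 = x ∨ f 2 = y := or_iff_not_imp_left.mpr (hc (f 2))
  rcases e0 with h0 | h0 <;> rcases e1 with h1 | h1 <;> rcases e2 with h2 | h2 <;>
    first
      | exact absurd (hf (h0.trans h1.symm)) (by decide)
      | exact absurd (hf (h0.trans h2.symm)) (by decide)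
      | exact absurd (hf (h1.trans h2.symm)) (by decide)

lemma union_table {M : Type} (a b : K) :
    (denoteK a ∪ denoteK b : Set (M × M)) = denoteK (unionK a b) := by
  cases a <;> cases b <;> ext ⟨x, y⟩ <;> simp [denoteK, unionK] <;> tauto

lemma inter_table {M : Type} (a b : K) :
    (denoteK a ∩ denoteK b : Set (M × M)) = denoteK (interK a b) := by
  cases a <;> cases b <;> ext ⟨x, y⟩ <;> simp [denoteK, interK] <;> tauto

lemma compl_table {M : Type} (a : K) :
    ((denoteK a)ᶜ : Set (M × M)) = denoteK (complK a) := by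
  cases a <;> ext ⟨x, y⟩ <;> simp [denoteK, complK]

lemma comp_table {M : Type} (h : ∃ f : Fin 3 → M, Function.Injective f) (a b : K) :
    {p : M × M | ∃ z, (p.1, z) ∈ denoteK a ∧ (z, p.2) ∈ denoteK b} = denoteK (compK a b) := by
  cases a <;> cases b <;> ext ⟨x, y⟩ <;> simp [denoteK, compK] <;>
    first
      | tauto
      | (obtain ⟨z, hz1, hz2⟩ := exists_third h x y; exact ⟨z, fun e => hz1 e.symm, hz2⟩)
      | (obtain ⟨z, hz1, _⟩ := exists_third h x x; exact ⟨z, fun e => hz1 e.symm⟩)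
      | (obtain ⟨z, hz1, _⟩ := exists_third h y y; exact ⟨z, hz1⟩)
      | (obtain ⟨f, _⟩ := h; exact ⟨f 0, trivial, trivial⟩)
      | (obtain ⟨f, _⟩ := h; exact ⟨f 0, trivial⟩)

lemma dagger_table {M : Type} (h : ∃ f : Fin 3 → M, Function.Injective f) (a b : K) :
    {p : M × M | ∀ z, (p.1, z) ∈ denoteK a ∨ (z, p.2) ∈ denoteK b} = denoteK (daggerK a b) := by
  have key : {p : M × M | ∀ z, (p.1, z) ∈ denoteK a ∨ (z, p.2) ∈ denoteK b}
      = ({p : M × M | ∃ z, (p.1, z) ∈ (denoteK a)ᶜ ∧ (z, p.2) ∈ (denoteK b)ᶜ})ᶜ := by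
    ext ⟨x, y⟩
    simp only [Set.mem_setOf_eq, Set.mem_compl_iff, not_exists, not_and]
    constructor
    · intro hz z hza
      rcases hz z with h' | h'
      · exact absurd h' hza
      · exact absurd h' ∘ id
    · intro hz z
      by_cases hza : (x, z) ∈ denoteK a
      · exact Or.inl hza
      · by_cases hzb : (z, y) ∈ denoteK b
        · exact Or.inr hzb
        · exact absurd hzb (hz z hza)
  rw [key, compl_table a, compl_table b, comp_table h, compl_table]
  rfl

lemma fin2_cases (i : Fin 2) : i = 0 ∨ i = 1 := by omega

lemma proj_table {M : Type} (π : Fin 2 → Fin 2) (k : K) :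
    {p : M × M | ((fun i : Fin 2 => if i = 0 then p.1 else p.2) (π 0),
        (fun i : Fin 2 => if i = 0 then p.1 else p.2) (π 1)) ∈ denoteK k}
      = denoteK (projK π k) := by
  rcases fin2_cases (π 0) with h0 | h0 <;> rcases fin2_cases (π 1) with h1 | h1 <;>
    cases k <;> ext ⟨x, y⟩ <;> simp [denoteK, projK, h0, h1] <;>
      first | exact eq_comm | exact ne_comm

lemma main_lemma {V : Type} (t : CoR V) (h : vo t = 0) : ∃ k : K, equivGe3 t (toCoR k) := by
  induction t with
  | var a => simp [vo] at h
  | bot => exact ⟨.kbot, fun M _ ρ => rfl⟩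
  | top => exact ⟨.ktop, fun M _ ρ => rfl⟩
  | ident => exact ⟨.kid, fun M _ ρ => rfl⟩
  | diff => exact ⟨.kdiff, fun M _ ρ => rfl⟩
  | union t s iht ihs =>
      simp [vo, Nat.add_eq_zero] at h
      obtain ⟨k1, h1⟩ := iht h.1
      obtain ⟨k2, h2⟩ := ihs h.2
      refine ⟨unionK k1 k2, fun M hM ρ => ?_⟩
      show denote ρ t ∪ denote ρ s = _
      rw [h1 M hM ρ, h2 M hM ρ, denote_toCoR, denote_toCoR, denote_toCoR, union_table]
  | inter t s iht ihs =>
      simp [vo, Nat.add_eq_zero] at h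
      obtain ⟨k1, h1⟩ := iht h.1
      obtain ⟨k2, h2⟩ := ihs h.2
      refine ⟨interK k1 k2, fun M hM ρ => ?_⟩
      show denote ρ t ∩ denote ρ s = _
      rw [h1 M hM ρ, h2 M hM ρ, denote_toCoR, denote_toCoR, denote_toCoR, inter_table]
  | compl t iht =>
      simp [vo] at h
      obtain ⟨k1, h1⟩ := iht h
      refine ⟨complK k1, fun M hM ρ => ?_⟩
      show (denote ρ t)ᶜ = _
      rw [h1 M hM ρ, denote_toCoR, denote_toCoR, compl_table]
  | comp t s iht ihs =>
      simp [vo, Nat.add_eq_zero] at h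
      obtain ⟨k1, h1⟩ := iht h.1
      obtain ⟨k2, h2⟩ := ihs h.2
      refine ⟨compK k1 k2, fun M hM ρ => ?_⟩
      show {p : M × M | ∃ z, (p.1, z) ∈ denote ρ t ∧ (z, p.2) ∈ denote ρ s} = _
      rw [h1 M hM ρ, h2 M hM ρ, denote_toCoR, denote_toCoR, denote_toCoR, comp_table hM]
  | dagger t s iht ihs =>
      simp [vo, Nat.add_eq_zero] at h
      obtain ⟨k1, h1⟩ := iht h.1
      obtain ⟨k2, h2⟩ := ihs h.2
      refine ⟨daggerK k1 k2, fun M hM ρ => ?_⟩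
      show {p : M × M | ∀ z, (p.1, z) ∈ denote ρ t ∨ (z, p.2) ∈ denote ρ s} = _
      rw [h1 M hM ρ, h2 M hM ρ, denote_toCoR, denote_toCoR, denote_toCoR, dagger_table hM]
  | proj π t iht =>
      simp [vo] at h
      obtain ⟨k1, h1⟩ := iht h
      refine ⟨projK π k1, fun M hM ρ => ?_⟩
      show {p : M × M | _ ∈ denote ρ t} = _
      rw [h1 M hM ρ, denote_toCoR, denote_toCoR, proj_table]

end Aux

/-- Every variable-free CoR term is equivalent over `REL_{≥3}` to one of `⊥, ⊤, I, D`,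
and these four constants are pairwise non-equivalent, so the quotient of the
0-variable-occurrence fragment by `∼_{REL_{≥3}}` has exactly four classes. -/
theorem ground_terms_classes {V : Type} [Fintype V] :
    (∀ t : CoR V, vo t = 0 →
      equivGe3 t CoR.bot ∨ equivGe3 t CoR.top ∨ equivGe3 t CoR.ident ∨ equivGe3 t CoR.diff) ∧
    ¬ equivGe3 (CoR.bot : CoR V) CoR.top ∧ ¬ equivGe3 (CoR.bot : CoR V) CoR.ident ∧
    ¬ equivGe3 (CoR.bot : CoR V) CoR.diff ∧ ¬ equivGe3 (CoR.top : CoR V) CoR.ident ∧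
    ¬ equivGe3 (CoR.top : CoR V) CoR.diff ∧ ¬ equivGe3 (CoR.ident : CoR V) CoR.diff := by
  have inj3 : ∃ f : Fin 3 → Fin 3, Function.Injective f := ⟨id, fun _ _ h => h⟩
  refine ⟨fun t ht => ?_, ?_, ?_, ?_, ?_, ?_, ?_⟩
  · obtain ⟨k, hk⟩ := main_lemma t ht
    cases k
    · exact Or.inl hk
    · exact Or.inr (Or.inl hk)
    · exact Or.inr (Or.inr (Or.inl hk))
    · exact Or.inr (Or.inr (Or.inr hk))
  · intro h
    have hh := h (Fin 3) inj3 (fun _ => ∅)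
    rw [Set.ext_iff] at hh
    have h2 := (hh ((0 : Fin 3), (0 : Fin 3))).2 trivial
    simp [denote] at h2
  · intro h
    have hh := h (Fin 3) inj3 (fun _ => ∅)
    rw [Set.ext_iff] at hh
    have h2 := (hh ((0 : Fin 3), (0 : Fin 3))).2 rfl
    simp [denote] at h2
  · intro h
    have hh := h (Fin 3) inj3 (fun _ => ∅)
    rw [Set.ext_iff] at hh
    have h2 := (hh ((0 : Fin 3), (1 : Fin 3))).2 (show (0 : Fin 3) ≠ 1 by decide)
    simp [denote] at h2
  · intro h
    have hh := h (Fin 3) inj3 (fun _ => ∅)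
    rw [Set.ext_iff] at hh
    have h2 := (hh ((0 : Fin 3), (1 : Fin 3))).1 trivial
    simp [denote] at h2
  · intro h
    have hh := h (Fin 3) inj3 (fun _ => ∅)
    rw [Set.ext_iff] at hh
    have h2 := (hh ((0 : Fin 3), (0 : Fin 3))).1 trivial
    simp [denote] at h2
  · intro h
    have hh := h (Fin 3) inj3 (fun _ => ∅)
    rw [Set.ext_iff] at hh
    have h2 := (hh ((0 : Fin 3), (0 : Fin 3))).1 rfl
    simp [denote] at h2
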